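/- Consider the κ-color Greenberg–Hastings model on the path graph with vertex set {1,...,n}, where vertices i and i+1 are adjacent. For every initial configuration X_0 : {1,...,n} → ℤ/κℤ, the configuration X_T is identically 0 for every T > n + κ. In other words, GHM on a path of n nodes always synchronizes to the all-zero state within n + κ iterations. -/
import Mathlib

section GHMAux

variable {κ n : ℕ}

/-- Backward step: a vertex with color 1 at time t+1 was 0 and had a neighbor with color 1. -/
lemma ghm_back (hκ : 3 ≤ κ) {G : SimpleGraph (Fin n)} {X : ℕ → Fin n → ZMod κ}
    (hX : ∀ t v,
      (X t v = 0 → ¬ (∃ u, G.Adj v u ∧ X t u = 1) → X (t + 1) v = 0) ∧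
      (X t v = 0 → (∃ u, G.Adj v u ∧ X t u = 1) → X (t + 1) v = 1) ∧
      (X t v ≠ 0 → X (t + 1) v = X t v + 1))
    {t : ℕ} {v : Fin n} (h1 : X (t + 1) v = 1) :
    X t v = 0 ∧ ∃ u, G.Adj v u ∧ X t u = 1 := by
  have hone : (1 : ZMod κ) ≠ 0 := by
    intro h
    have h2 : ((1 : ℕ) : ZMod κ) = 0 := by exact_mod_cast h
    have := (ZMod.natCast_eq_zero_iff 1 κ).mp h2
    have := Nat.le_of_dvd (by norm_num) this
    omega
  have h0 : X t v = 0 := by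
    by_contra h
    have := (hX t v).2.2 h
    rw [h1] at this
    apply h
    have : X t v = 0 := by linear_combination -this
    exact this
  refine ⟨h0, ?_⟩
  by_contra hne
  have := (hX t v).1 h0 hne
  rw [h1] at this
  exact hone this

/-- 1 ≠ 0 in ZMod κ for κ ≥ 3. -/
lemma ghm_one_ne (hκ : 3 ≤ κ) : (1 : ZMod κ) ≠ 0 := by
  intro h
  have h2 : ((1 : ℕ) : ZMod κ) = 0 := by exact_mod_cast h
  have := (ZMod.natCast_eq_zero_iff 1 κ).mp h2
  have := Nat.le_of_dvd (by norm_num) this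
  omega

/-- 2 ≠ 0 in ZMod κ for κ ≥ 3. -/
lemma ghm_two_ne (hκ : 3 ≤ κ) : (2 : ZMod κ) ≠ 0 := by
  intro h
  have h2 : ((2 : ℕ) : ZMod κ) = 0 := by exact_mod_cast h
  have := (ZMod.natCast_eq_zero_iff 2 κ).mp h2
  have := Nat.le_of_dvd (by norm_num) this
  omega

/-- Rightward-moving backward walk of 1's. -/
lemma ghm_walkR (hκ : 3 ≤ κ) {G : SimpleGraph (Fin n)} (hG : G = SimpleGraph.pathGraph n)
    {X : ℕ → Fin n → ZMod κ}
    (hX : ∀ t v,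
      (X t v = 0 → ¬ (∃ u, G.Adj v u ∧ X t u = 1) → X (t + 1) v = 0) ∧
      (X t v = 0 → (∃ u, G.Adj v u ∧ X t u = 1) → X (t + 1) v = 1) ∧
      (X t v ≠ 0 → X (t + 1) v = X t v + 1)) :
    ∀ (i t : ℕ) (v w : Fin n), (w : ℕ) = (v : ℕ) + 1 → X t w = 1 → X t v = 0 →
      i ≤ t → ∃ u : Fin n, (u : ℕ) = (v : ℕ) + 1 + i ∧ X (t - i) u = 1 := by
  intro i
  induction i with
  | zero => intro t v w hw h1 _ _; exact ⟨w, by omega, by simpa using h1⟩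
  | succ i ih =>
    intro t v w hw h1 h0 hit
    obtain ⟨s, rfl⟩ : ∃ s, t = s + 1 := ⟨t - 1, by omega⟩
    obtain ⟨hw0, u, hadj, hu1⟩ := ghm_back hκ hX h1
    rw [hG, SimpleGraph.pathGraph_adj] at hadj
    rcases hadj with hr | hl
    · -- u is to the right of w
      obtain ⟨u', hu', h1'⟩ := ih s w u (by omega) hu1 hw0 (by omega)
      exact ⟨u', by omega, by simpa [Nat.succ_sub_succ] using h1'⟩
    · -- u is to the left of w, i.e. u = v : contradiction
      exfalso
      have huv : u = v := Fin.ext (by omega)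
      rw [huv] at hu1
      have hne : X s v ≠ 0 := by rw [hu1]; exact ghm_one_ne hκ
      have h2 := (hX s v).2.2 hne
      rw [hu1] at h2
      exact ghm_two_ne hκ (by rw [← h0, h2]; norm_num)

/-- Leftward-moving backward walk of 1's. -/
lemma ghm_walkL (hκ : 3 ≤ κ) {G : SimpleGraph (Fin n)} (hG : G = SimpleGraph.pathGraph n)
    {X : ℕ → Fin n → ZMod κ}
    (hX : ∀ t v,
      (X t v = 0 → ¬ (∃ u, G.Adj v u ∧ X t u = 1) → X (t + 1) v = 0) ∧
      (X t v = 0 → (∃ u, G.Adj v u ∧ X t u = 1) → X (t + 1) v = 1) ∧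
      (X t v ≠ 0 → X (t + 1) v = X t v + 1)) :
    ∀ (i t : ℕ) (v w : Fin n), (w : ℕ) + 1 = (v : ℕ) → X t w = 1 → X t v = 0 →
      i ≤ t → ∃ u : Fin n, (u : ℕ) + 1 + i = (v : ℕ) ∧ X (t - i) u = 1 := by
  intro i
  induction i with
  | zero => intro t v w hw h1 _ _; exact ⟨w, by omega, by simpa using h1⟩
  | succ i ih =>
    intro t v w hw h1 h0 hit
    obtain ⟨s, rfl⟩ : ∃ s, t = s + 1 := ⟨t - 1, by omega⟩
    obtain ⟨hw0, u, hadj, hu1⟩ := ghm_back hκ hX h1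
    rw [hG, SimpleGraph.pathGraph_adj] at hadj
    rcases hadj with hr | hl
    · -- u is to the right of w, i.e. u = v : contradiction
      exfalso
      have huv : u = v := Fin.ext (by omega)
      rw [huv] at hu1
      have hne : X s v ≠ 0 := by rw [hu1]; exact ghm_one_ne hκ
      have h2 := (hX s v).2.2 hne
      rw [hu1] at h2
      exact ghm_two_ne hκ (by rw [← h0, h2]; norm_num)
    · obtain ⟨u', hu', h1'⟩ := ih s w u (by omega) hu1 hw0 (by omega)
      exact ⟨u', by omega, by simpa [Nat.succ_sub_succ] using h1'⟩

/-- No vertex has color 1 at any time ≥ n. -/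
lemma ghm_no_one (hκ : 3 ≤ κ) (hn : 1 ≤ n) {G : SimpleGraph (Fin n)}
    (hG : G = SimpleGraph.pathGraph n)
    {X : ℕ → Fin n → ZMod κ}
    (hX : ∀ t v,
      (X t v = 0 → ¬ (∃ u, G.Adj v u ∧ X t u = 1) → X (t + 1) v = 0) ∧
      (X t v = 0 → (∃ u, G.Adj v u ∧ X t u = 1) → X (t + 1) v = 1) ∧
      (X t v ≠ 0 → X (t + 1) v = X t v + 1)) :
    ∀ t v, n ≤ t → X t v ≠ 1 := by
  intro t v ht h1
  obtain ⟨s, rfl⟩ : ∃ s, t = s + 1 := ⟨t - 1, by omega⟩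
  obtain ⟨h0, w, hadj, hw1⟩ := ghm_back hκ hX h1
  rw [hG, SimpleGraph.pathGraph_adj] at hadj
  rcases hadj with hr | hl
  · obtain ⟨u, hu, _⟩ := ghm_walkR hκ hG hX s s v w (by omega) hw1 h0 le_rfl
    have := u.isLt
    omega
  · obtain ⟨u, hu, _⟩ := ghm_walkL hκ hG hX s s v w hl hw1 h0 le_rfl
    have := v.isLt
    omega

/-- Counting down to zero. -/
lemma ghm_count (hκ : 3 ≤ κ) {X : ℕ → Fin n → ZMod κ}
    (hstep : ∀ t v, X t v ≠ 0 → X (t + 1) v = X t v + 1) :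
    ∀ (m t : ℕ) (v : Fin n), X t v ≠ 0 → (X t v).val + (m + 1) = κ →
      X (t + (m + 1)) v = 0 := by
  haveI : NeZero κ := ⟨by omega⟩
  intro m
  induction m with
  | zero =>
    intro t v h0 hv
    have hcast : X t v + 1 = (((X t v).val + 1 : ℕ) : ZMod κ) := by
      push_cast
      rw [ZMod.natCast_zmod_val]
    rw [hstep t v h0, hcast, hv]
    exact ZMod.natCast_self κ
  | succ m ih =>
    intro t v h0 hv
    have hlt : (X t v).val + 1 < κ := by omega
    have hstep1 := hstep t v h0
    have hcast : X t v + 1 = (((X t v).val + 1 : ℕ) : ZMod κ) := by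
      push_cast
      rw [ZMod.natCast_zmod_val]
    have hval : (X (t + 1) v).val = (X t v).val + 1 := by
      rw [hstep1, hcast]
      exact ZMod.val_cast_of_lt hlt
    have hne : X (t + 1) v ≠ 0 := by
      intro h
      rw [h] at hval
      simp [ZMod.val_zero] at hval
    have := ih (t + 1) v hne (by omega)
    rw [show t + 1 + (m + 1) = t + (m + 1 + 1) by omega] at this
    exact this

end GHMAux

/-- GHM on a path of n nodes always synchronizes to the all-zero state
within n + κ iterations, for every initial configuration. -/
theorem ghm_path_synchronizes (κ n : ℕ) (hκ : 3 ≤ κ) (hn : 1 ≤ n)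
    (G : SimpleGraph (Fin n)) (hG : G = SimpleGraph.pathGraph n)
    (X : ℕ → Fin n → ZMod κ)
    (hX : ∀ t v,
      (X t v = 0 → ¬ (∃ u, G.Adj v u ∧ X t u = 1) → X (t + 1) v = 0) ∧
      (X t v = 0 → (∃ u, G.Adj v u ∧ X t u = 1) → X (t + 1) v = 1) ∧
      (X t v ≠ 0 → X (t + 1) v = X t v + 1)) :
    ∀ T, n + κ < T → ∀ v, X T v = 0 := by
  haveI : NeZero κ := ⟨by omega⟩
  have hno := ghm_no_one hκ hn hG hX
  -- persistence of zero after time n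
  have hpersist : ∀ s t (v : Fin n), n ≤ s → s ≤ t → X s v = 0 → X t v = 0 := by
    intro s t v hns hst h0
    induction t, hst using Nat.le_induction with
    | base => exact h0
    | succ t ht ih =>
      refine (hX t v).1 ih ?_
      rintro ⟨u, _, hu1⟩
      exact hno t u (le_trans hns ht) hu1
  intro T hT v
  by_cases hc : X n v = 0
  · exact hpersist n T v le_rfl (by omega) hc
  · have hval1 : 1 ≤ (X n v).val := by
      rcases Nat.eq_zero_or_pos (X n v).val with h | h
      · exact absurd ((ZMod.val_eq_zero _).mp h) hc
      · omega
    have hvallt : (X n v).val < κ := ZMod.val_lt _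
    obtain ⟨m, hm⟩ : ∃ m, (X n v).val + (m + 1) = κ := ⟨κ - (X n v).val - 1, by omega⟩
    have h0 := ghm_count hκ (fun t v h => (hX t v).2.2 h) m n v hc hm
    exact hpersist (n + (m + 1)) T v (by omega) (by omega) h0
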